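/- arXiv:math/0603046 — 4 statements merged into one kernel-verified Lean document; each statement's English description precedes it below -/
import Mathlib

section
/- Suppose decomposition maps factor: for all λ ∈ Λ and μ ∈ Λ°, (E^λ : M^μ) = Σ_{ν ∈ Λ°_e} (E^λ : M_e^ν)·(M_e^ν : M^μ), where all multiplicities are nonnegative integers. Assume ι : Λ° → Λ and ι_e : Λ°_e → Λ are injections defining canonical basic sets with respect to a function a : Λ → ℕ, i.e. (E^{ι(μ)} : M^μ) = 1 and (E^λ : M^μ) = 0 unless a'_μ < a(λ) or λ = ι(μ), where a'_μ = min{a(λ) : (E^λ : M^μ) ≠ 0}, and similarly for ι_e. Assume |Λ°| = |Λ°_e|. Then ι(Λ°) = ι_e(Λ°_e). -/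
lemma canonical_aMin {Λ Λ₀ : Type*} {D : Λ → Λ₀ → ℕ} {a : Λ → ℕ} {ι : Λ₀ → Λ}
    (h : Function.Injective ι ∧ (∀ μ, D (ι μ) μ = 1) ∧
      ∀ l μ, D l μ ≠ 0 → sInf {m | ∃ l', D l' μ ≠ 0 ∧ a l' = m} < a l ∨ l = ι μ)
    (μ : Λ₀) : a (ι μ) = sInf {m | ∃ l', D l' μ ≠ 0 ∧ a l' = m} := by
  have hne : (a (ι μ)) ∈ {m | ∃ l', D l' μ ≠ 0 ∧ a l' = m} :=
    ⟨ι μ, by simp [h.2.1 μ], rfl⟩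
  obtain ⟨l₀, hl₀, hal₀⟩ := Nat.sInf_mem (Set.nonempty_of_mem hne)
  rcases h.2.2 l₀ μ hl₀ with hlt | heq
  · omega
  · rw [← hal₀, heq]


/-- `ι : Λ° → Λ` is a canonical basic set for the decomposition matrix
`D : Λ × Λ° → ℕ` with respect to `a : Λ → ℕ`:  `D(ι(μ),μ) = 1` and
`D(λ,μ) = 0` unless `a'_μ < a(λ)` or `λ = ι(μ)`, where
`a'_μ = min { a(λ) | D(λ,μ) ≠ 0 }`. -/
def IsCanonicalBasicSet {Λ Λ₀ : Type*} (D : Λ → Λ₀ → ℕ) (a : Λ → ℕ)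
    (ι : Λ₀ → Λ) : Prop :=
  Function.Injective ι ∧ (∀ μ, D (ι μ) μ = 1) ∧
    ∀ l μ, D l μ ≠ 0 → sInf {m | ∃ l', D l' μ ≠ 0 ∧ a l' = m} < a l ∨ l = ι μ

/-- If the decomposition map factors, both matrices admit canonical basic sets,
and the index sets have the same cardinality, then the two basic sets coincide. -/
theorem canonicalBasicSet_eq {Λ Λ₀ Λe : Type*} [Fintype Λ] [Fintype Λ₀] [Fintype Λe]
    (D : Λ → Λ₀ → ℕ) (D2 : Λ → Λe → ℕ) (D1 : Λe → Λ₀ → ℕ) (a : Λ → ℕ)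
    (hfact : ∀ l μ, D l μ = ∑ ν : Λe, D2 l ν * D1 ν μ)
    (ι : Λ₀ → Λ) (ιe : Λe → Λ)
    (hι : IsCanonicalBasicSet D a ι) (hιe : IsCanonicalBasicSet D2 a ιe)
    (hcard : Fintype.card Λ₀ = Fintype.card Λe) :
    Set.range ι = Set.range ιe := by
  have hsub : Set.range ι ⊆ Set.range ιe := by
    rintro _ ⟨μ, rfl⟩
    have h1 : D (ι μ) μ = 1 := hι.2.1 μ
    have hsum : (∑ ν : Λe, D2 (ι μ) ν * D1 ν μ) ≠ 0 := by
      rw [← hfact]; omega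
    obtain ⟨ν, -, hν⟩ := Finset.exists_ne_zero_of_sum_ne_zero hsum
    have hD2 : D2 (ι μ) ν ≠ 0 := fun h => hν (by simp [h])
    have hD1 : D1 ν μ ≠ 0 := fun h => hν (by simp [h])
    rcases hιe.2.2 (ι μ) ν hD2 with hlt | heq
    · exfalso
      rw [← canonical_aMin hιe ν] at hlt
      have hDe : D (ιe ν) μ ≠ 0 := by
        rw [hfact]
        have : D2 (ιe ν) ν * D1 ν μ ≠ 0 := by
          simp [hιe.2.1 ν, hD1]
        intro hz
        exact this (Finset.sum_eq_zero_iff.mp hz ν (Finset.mem_univ ν))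
      have hle : sInf {m | ∃ l', D l' μ ≠ 0 ∧ a l' = m} ≤ a (ιe ν) :=
        Nat.sInf_le ⟨ιe ν, hDe, rfl⟩
      rw [← canonical_aMin hι μ] at hle
      omega
    · exact ⟨ν, heq.symm⟩
  classical
  refine Set.eq_of_subset_of_ncard_le hsub ?_ (Set.toFinite _)
  rw [Set.ncard_eq_toFinset_card', Set.ncard_eq_toFinset_card',
    Set.toFinset_range, Set.toFinset_range,
    Finset.card_image_of_injective _ hι.1, Finset.card_image_of_injective _ hιe.1]
  simp [hcard]
end

section
/- With hypotheses as in the factorization lemma for canonical basic sets (factorization of decomposition matrices through an intermediate set Λ°_e of the same cardinality as Λ°, and canonical basic sets ι and ι_e), for each μ ∈ Λ° there is a unique μ₀ ∈ Λ°_e with (E^{ι(μ)} : M_e^{μ₀}) ≠ 0 and (M_e^{μ₀} : M^μ) ≠ 0, and moreover ι(μ) = ι_e(μ₀). -/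
lemma sInf_eq_of_canonical {Λ Λ₀ : Type*} (D : Λ → Λ₀ → ℕ) (a : Λ → ℕ)
    (ι : Λ₀ → Λ) (h : IsCanonicalBasicSet D a ι) (μ : Λ₀) :
    sInf {m | ∃ l', D l' μ ≠ 0 ∧ a l' = m} = a (ι μ) := by
  have hne : {m | ∃ l', D l' μ ≠ 0 ∧ a l' = m}.Nonempty :=
    ⟨a (ι μ), ι μ, by simp [h.2.1 μ], rfl⟩
  obtain ⟨l, hl, hal⟩ := Nat.sInf_mem hne
  rcases h.2.2 l μ hl with hlt | heq
  · omega
  · rw [← hal, heq]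

/-- With the factorization of decomposition matrices and canonical basic sets
`ι`, `ιe`, for each `μ` there is a unique `μ₀` with `(E^{ι(μ)} : M_e^{μ₀}) ≠ 0`
and `(M_e^{μ₀} : M^μ) ≠ 0`, and for it `ι(μ) = ιe(μ₀)`. -/
theorem canonicalBasicSet_factor {Λ Λ₀ Λe : Type*} [Fintype Λ] [Fintype Λ₀] [Fintype Λe]
    (D : Λ → Λ₀ → ℕ) (D2 : Λ → Λe → ℕ) (D1 : Λe → Λ₀ → ℕ) (a : Λ → ℕ)
    (hfact : ∀ l μ, D l μ = ∑ ν : Λe, D2 l ν * D1 ν μ)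
    (ι : Λ₀ → Λ) (ιe : Λe → Λ)
    (hι : IsCanonicalBasicSet D a ι) (hιe : IsCanonicalBasicSet D2 a ιe)
    (hcard : Fintype.card Λ₀ = Fintype.card Λe) :
    ∀ μ : Λ₀, (∃! μ₀ : Λe, D2 (ι μ) μ₀ ≠ 0 ∧ D1 μ₀ μ ≠ 0) ∧
      ∀ μ₀ : Λe, D2 (ι μ) μ₀ ≠ 0 → D1 μ₀ μ ≠ 0 → ι μ = ιe μ₀ := by
  intro μ
  classical
  have hsum : ∑ ν : Λe, D2 (ι μ) ν * D1 ν μ = 1 := by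
    rw [← hfact]; exact hι.2.1 μ
  have hterm : ∀ ν : Λe, D2 (ι μ) ν ≠ 0 ∧ D1 ν μ ≠ 0 ↔ D2 (ι μ) ν * D1 ν μ ≠ 0 := by
    intro ν; constructor
    · rintro ⟨h1, h2⟩; exact Nat.mul_ne_zero h1 h2
    · intro h; exact ⟨fun h1 => h (by rw [h1, zero_mul]), fun h2 => h (by rw [h2, mul_zero])⟩
  constructor
  · -- existence
    have hex : ∃ ν : Λe, D2 (ι μ) ν * D1 ν μ ≠ 0 := by
      by_contra h
      push_neg at h
      rw [Finset.sum_eq_zero (fun ν _ => h ν)] at hsum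
      exact one_ne_zero hsum.symm
    obtain ⟨ν, hν⟩ := hex
    refine ⟨ν, (hterm ν).2 hν, ?_⟩
    intro ν' hν'
    have hν' := (hterm ν').1 hν'
    by_contra hne
    have h2 : 2 ≤ ∑ x : Λe, D2 (ι μ) x * D1 x μ := by
      have hsub : ({ν', ν} : Finset Λe) ⊆ Finset.univ := Finset.subset_univ _
      calc 2 ≤ ∑ x ∈ ({ν', ν} : Finset Λe), D2 (ι μ) x * D1 x μ := by
            rw [Finset.sum_pair hne]; omega
        _ ≤ _ := Finset.sum_le_sum_of_subset hsub
    omega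
  · -- ι μ = ιe μ₀
    intro μ₀ h2 h1
    rcases hιe.2.2 (ι μ) μ₀ h2 with hlt | heq
    · exfalso
      have hne : {m | ∃ l', D2 l' μ₀ ≠ 0 ∧ a l' = m}.Nonempty := ⟨a (ι μ), ι μ, h2, rfl⟩
      obtain ⟨l', hl', hal'⟩ := Nat.sInf_mem hne
      have hDl' : D l' μ ≠ 0 := by
        rw [hfact]
        intro h0
        have := Finset.sum_eq_zero_iff.1 h0 μ₀ (Finset.mem_univ _)
        exact Nat.mul_ne_zero hl' h1 this
      have hmem : a l' ∈ {m | ∃ l'', D l'' μ ≠ 0 ∧ a l'' = m} := ⟨l', hDl', rfl⟩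
      have hle : sInf {m | ∃ l'', D l'' μ ≠ 0 ∧ a l'' = m} ≤ a l' := Nat.sInf_le hmem
      rw [sInf_eq_of_canonical D a ι hι μ] at hle
      omega
    · exact heq
end

section
/- Let u be an invertible element of a field F and δ = ±1. The 2×2 matrices ρ(T_α) = [[−1, 0],[u² + δu + 1, u³]] and ρ(T_β) = [[u, u],[0, −1]] satisfy the defining relations of the Iwahori–Hecke algebra of type G₂ with parameters (u³, u): ρ(T_α)² = u³I + (u³−1)ρ(T_α), ρ(T_β)² = uI + (u−1)ρ(T_β), and (ρ(T_α)ρ(T_β))³ = (ρ(T_β)ρ(T_α))³. -/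
/-- The explicit `2×2` matrices of the representation `ρ_δ` (`δ = ±1`) satisfy the
defining relations of the Iwahori–Hecke algebra of type `G₂` with parameters
`(u³, u)`: both quadratic relations and the order-6 braid relation. -/
theorem heckeG2_two_dim_rep (F : Type*) [Field F] (u δ : F) (hu : u ≠ 0)
    (hδ : δ = 1 ∨ δ = -1) :
    (!![(-1 : F), 0; u ^ 2 + δ * u + 1, u ^ 3]) ^ 2 =
        u ^ 3 • (1 : Matrix (Fin 2) (Fin 2) F) +
          (u ^ 3 - 1) • !![(-1 : F), 0; u ^ 2 + δ * u + 1, u ^ 3] ∧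
    (!![u, u; 0, (-1 : F)]) ^ 2 =
        u • (1 : Matrix (Fin 2) (Fin 2) F) + (u - 1) • !![u, u; 0, (-1 : F)] ∧
    (!![(-1 : F), 0; u ^ 2 + δ * u + 1, u ^ 3] * !![u, u; 0, (-1 : F)]) ^ 3 =
      (!![u, u; 0, (-1 : F)] * !![(-1 : F), 0; u ^ 2 + δ * u + 1, u ^ 3]) ^ 3 := by
  have hδ2 : δ ^ 2 = 1 := by rcases hδ with h | h <;> simp [h]
  refine ⟨?_, ?_, ?_⟩ <;>
    · ext i j
      fin_cases i <;> fin_cases j <;>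
        simp [pow_succ, Matrix.mul_apply, Fin.sum_univ_two, Matrix.one_apply] <;>
        (rcases hδ with h | h <;> subst h <;> ring)
end

section
/- Each of the four decomposition matrices for type G₂ listed for e = 2, 3, 6, 12 (of sizes 6×3, 6×4, 6×3, 6×5 respectively) admits a canonical basic set with respect to the a-function (a = 0, 1, 3, 3, 7, 12 on the six ordinary representations ind, ε₁, ρ₊, ρ₋, ε₂, ε): explicitly, for e=2 the basic set is {ind, ρ₊, ρ₋}, for e=3 it is {ind, ε₁, ρ₊, ρ₋}, for e=6 it is {ind, ε₁, ρ₊}, and for e=12 it is {ind, ε₁, ρ₊, ρ₋, ε₂}. -/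
/-- The `a`-function on the six ordinary representations
`ind, ε₁, ρ₊, ρ₋, ε₂, ε` of the Hecke algebra of type `G₂` with
parameters `(q³,q)`. -/
def aG2 : Fin 6 → ℕ := ![0, 1, 3, 3, 7, 12]

/-- decomposition matrix for e = 2 -/
def DG2e2 : Fin 6 → Fin 3 → ℕ :=
  ![![1,0,0], ![1,0,0], ![0,1,0], ![0,0,1], ![1,0,0], ![1,0,0]]

/-- decomposition matrix for e = 3 -/
def DG2e3 : Fin 6 → Fin 4 → ℕ :=
  ![![1,0,0,0], ![0,1,0,0], ![0,1,1,0], ![1,0,0,1], ![0,0,1,0], ![0,0,0,1]]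

/-- decomposition matrix for e = 6 -/
def DG2e6 : Fin 6 → Fin 3 → ℕ :=
  ![![1,0,0], ![0,1,0], ![0,0,1], ![1,1,0], ![1,0,0], ![0,1,0]]

/-- decomposition matrix for e = 12 -/
def DG2e12 : Fin 6 → Fin 5 → ℕ :=
  ![![1,0,0,0,0], ![0,1,0,0,0], ![1,0,1,0,0], ![0,0,0,1,0], ![0,0,0,0,1],
    ![0,0,1,0,0]]

lemma isCanonicalBasicSet_of {Λ Λ₀ : Type*} (D : Λ → Λ₀ → ℕ) (a : Λ → ℕ)
    (ι : Λ₀ → Λ) (hinj : Function.Injective ι) (hone : ∀ μ, D (ι μ) μ = 1)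
    (hmin : ∀ l μ, D l μ ≠ 0 → l ≠ ι μ → a (ι μ) < a l) :
    IsCanonicalBasicSet D a ι := by
  refine ⟨hinj, hone, fun l μ h => ?_⟩
  by_cases he : l = ι μ
  · exact Or.inr he
  · exact Or.inl (lt_of_le_of_lt
      (Nat.sInf_le ⟨ι μ, by simp [hone], rfl⟩) (hmin l μ h he))

/-- Each of the four decomposition matrices for type `G₂` (for `e = 2, 3, 6, 12`)
admits a canonical basic set with respect to the `a`-function, given respectively
by `{ind, ρ₊, ρ₋}`, `{ind, ε₁, ρ₊, ρ₋}`, `{ind, ε₁, ρ₊}` and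
`{ind, ε₁, ρ₊, ρ₋, ε₂}`. -/
theorem heckeG2_canonical_basic_sets :
    IsCanonicalBasicSet DG2e2 aG2 ![0, 2, 3] ∧
    IsCanonicalBasicSet DG2e3 aG2 ![0, 1, 2, 3] ∧
    IsCanonicalBasicSet DG2e6 aG2 ![0, 1, 2] ∧
    IsCanonicalBasicSet DG2e12 aG2 ![0, 1, 2, 3, 4] := by
  exact ⟨isCanonicalBasicSet_of _ _ _ (by decide) (by decide) (by decide),
    isCanonicalBasicSet_of _ _ _ (by decide) (by decide) (by decide),
    isCanonicalBasicSet_of _ _ _ (by decide) (by decide) (by decide),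
    isCanonicalBasicSet_of _ _ _ (by decide) (by decide) (by decide)⟩
end
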